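/- arXiv:2209.04243 — 7 statements merged into one kernel-verified Lean document; each statement's English description precedes it below -/
import Mathlib

section
/- Let p be a prime, f : F_p^n → ℂ, S ⊆ [n], and x ∈ F_p^S. Suppose that I_{T,x_T}[f] ≤ ε for all subsets T ⊆ S. Then ‖f_{S→x}‖₂² ≤ 2^{2|S|} ε. -/
/-!
Evaluating the identity `f = ∑_{T ⊆ S} E_{S \ T} L_T f` at points that extend `x` writes
`f_{S→x}` as the sum of the `2^|S|` functions `E_{S \ T} D_{T, x_T} f`. Averaging is a
contraction in `L²`, so each of them has squared norm at most `ε`, and Cauchy–Schwarz over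
the `2^|S|` summands gives `‖f_{S→x}‖₂² ≤ 2^|S| · 2^|S| · ε`. The identity itself follows by
induction on `S` from `L_{T ∪ {a}} = L_T - L_T E_a` and `E_A E_B = E_{A ∪ B}` for disjoint
`A`, `B`.
-/

open Finset

noncomputable def chi (p n : ℕ) [NeZero p] (γ x : Fin n → ZMod p) : ℂ :=
  Complex.exp (2 * (Real.pi : ℂ) * Complex.I * (((∑ i, γ i * x i : ZMod p)).val : ℂ) / (p : ℂ))

noncomputable def Ex (p n : ℕ) [NeZero p] (f : (Fin n → ZMod p) → ℂ) : ℂ :=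
  (∑ x : Fin n → ZMod p, f x) / (Fintype.card (Fin n → ZMod p) : ℂ)

noncomputable def fhat (p n : ℕ) [NeZero p] (f : (Fin n → ZMod p) → ℂ) (γ : Fin n → ZMod p) : ℂ :=
  Ex p n (fun x => f x * (starRingEnd ℂ) (chi p n γ x))

def combine (p n : ℕ) [NeZero p] (S : Finset (Fin n)) (x : {i // i ∈ S} → ZMod p)
    (y : Fin n → ZMod p) : Fin n → ZMod p :=
  fun i => if h : i ∈ S then x ⟨i, h⟩ else y i

noncomputable def ET (p n : ℕ) [NeZero p] (T : Finset (Fin n)) (f : (Fin n → ZMod p) → ℂ) :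
    (Fin n → ZMod p) → ℂ :=
  fun z => (∑ y : {i // i ∈ T} → ZMod p, f (combine p n T y z)) /
    (Fintype.card ({i // i ∈ T} → ZMod p) : ℂ)

noncomputable def LS (p n : ℕ) [NeZero p] (S : Finset (Fin n)) (f : (Fin n → ZMod p) → ℂ) :
    (Fin n → ZMod p) → ℂ :=
  fun z => ∑ T ∈ S.powerset, (-1 : ℂ) ^ T.card * ET p n T f z

noncomputable def DD (p n : ℕ) [NeZero p] (S : Finset (Fin n)) (x : {i // i ∈ S} → ZMod p)
    (f : (Fin n → ZMod p) → ℂ) : (Fin n → ZMod p) → ℂ :=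
  fun z => LS p n S f (combine p n S x z)

noncomputable def N2 (p n : ℕ) [NeZero p] (f : (Fin n → ZMod p) → ℂ) : ℝ :=
  (∑ x : Fin n → ZMod p, ‖f x‖ ^ 2) / (Fintype.card (Fin n → ZMod p) : ℝ)

lemma norm_sum_sq_le_card_mul {ι E : Type*} [SeminormedAddCommGroup E] (s : Finset ι)
    (g : ι → E) : ‖∑ i ∈ s, g i‖ ^ 2 ≤ s.card * ∑ i ∈ s, ‖g i‖ ^ 2 :=
  (pow_le_pow_left₀ (norm_nonneg _) (norm_sum_le s g) 2).trans sq_sum_le_card_mul_sum_sq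

section Averaging

variable {p n : ℕ} [NeZero p]

lemma combine_combine_of_disjoint {A B : Finset (Fin n)} (hAB : Disjoint A B)
    (y : {i // i ∈ A} → ZMod p) (w : {i // i ∈ B} → ZMod p) (v : Fin n → ZMod p) :
    combine p n B w (combine p n A y v)
      = combine p n (A ∪ B) (Equiv.piFinsetUnion (fun _ => ZMod p) hAB (y, w)) v := by
  funext i
  by_cases hB : i ∈ B
  · simp [combine, hB, Equiv.piFinsetUnion_right _ hAB hB]
  by_cases hA : i ∈ A
  · simp [combine, hA, hB, Equiv.piFinsetUnion_left _ hAB hA]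
  · simp [combine, hA, hB]

lemma ET_ET_of_disjoint {A B : Finset (Fin n)} (hAB : Disjoint A B)
    (g : (Fin n → ZMod p) → ℂ) : ET p n A (ET p n B g) = ET p n (A ∪ B) g := by
  funext v
  let e := Equiv.piFinsetUnion (fun _ : Fin n => ZMod p) hAB
  have hcard := Fintype.card_congr e
  rw [Fintype.card_prod] at hcard
  simp only [ET, ← sum_div, div_div, combine_combine_of_disjoint hAB]
  rw [← Fintype.sum_prod_type', Equiv.sum_comp e (fun u => g (combine p n (A ∪ B) u v)),
    ← Nat.cast_mul, mul_comm, hcard]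

lemma ET_empty (g : (Fin n → ZMod p) → ℂ) : ET p n ∅ g = g := by
  funext v
  have hv (y : {i // i ∈ (∅ : Finset (Fin n))} → ZMod p) : combine p n ∅ y v = v := by
    funext i
    simp [combine]
  simp [ET, hv]

lemma ET_sum {ι : Type*} (s : Finset ι) (F : ι → (Fin n → ZMod p) → ℂ) (A : Finset (Fin n))
    (v : Fin n → ZMod p) :
    ET p n A (fun z => ∑ i ∈ s, F i z) v = ∑ i ∈ s, ET p n A (F i) v := by
  simp only [ET]
  rw [sum_comm, sum_div]

lemma ET_const_mul (c : ℂ) (F : (Fin n → ZMod p) → ℂ) (A : Finset (Fin n))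
    (v : Fin n → ZMod p) : ET p n A (fun z => c * F z) v = c * ET p n A F v := by
  simp only [ET, ← mul_sum, mul_div_assoc]

lemma ET_sub (F G : (Fin n → ZMod p) → ℂ) (A : Finset (Fin n)) (v : Fin n → ZMod p) :
    ET p n A (fun z => F z - G z) v = ET p n A F v - ET p n A G v := by
  simp only [ET, sum_sub_distrib, sub_div]

lemma ET_insert_of_notMem {a : Fin n} {A : Finset (Fin n)} (ha : a ∉ A)
    (g : (Fin n → ZMod p) → ℂ) : ET p n (insert a A) g = ET p n A (ET p n {a} g) := by
  rw [ET_ET_of_disjoint (disjoint_singleton_right.mpr ha), union_comm,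
    insert_eq]

lemma ET_singleton_comm {a : Fin n} {A : Finset (Fin n)} (ha : a ∉ A)
    (g : (Fin n → ZMod p) → ℂ) : ET p n {a} (ET p n A g) = ET p n A (ET p n {a} g) := by
  rw [ET_ET_of_disjoint (disjoint_singleton_left.mpr ha), ← insert_eq,
    ET_insert_of_notMem ha]

lemma ET_singleton_LS_comm {a : Fin n} {T : Finset (Fin n)} (ha : a ∉ T)
    (f : (Fin n → ZMod p) → ℂ) : ET p n {a} (LS p n T f) = LS p n T (ET p n {a} f) := by
  funext z
  unfold LS
  rw [ET_sum]
  refine sum_congr rfl fun R hR => ?_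
  rw [ET_const_mul, ET_singleton_comm fun h => ha (mem_powerset.mp hR h)]

lemma LS_insert_of_notMem {a : Fin n} {T : Finset (Fin n)} (ha : a ∉ T)
    (f : (Fin n → ZMod p) → ℂ) :
    LS p n (insert a T) f = fun z => LS p n T f z - LS p n T (ET p n {a} f) z := by
  funext z
  have hinsert : ∀ R ∈ T.powerset, (-1 : ℂ) ^ (insert a R).card * ET p n (insert a R) f z
      = -((-1 : ℂ) ^ R.card * ET p n R (ET p n {a} f) z) := by
    intro R hR
    have haR : a ∉ R := fun h => ha (mem_powerset.mp hR h)
    rw [card_insert_of_notMem haR, ET_insert_of_notMem haR]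
    ring
  simp only [LS]
  rw [sum_powerset_insert ha, sum_congr rfl hinsert, sum_neg_distrib,
    sub_eq_add_neg]

theorem sum_powerset_ET_sdiff_LS (S : Finset (Fin n)) (f : (Fin n → ZMod p) → ℂ)
    (v : Fin n → ZMod p) : ∑ T ∈ S.powerset, ET p n (S \ T) (LS p n T f) v = f v := by
  induction S using Finset.induction_on generalizing f with
  | empty => simp [LS, ET_empty]
  | insert a s ha ih =>
    have hnot {T : Finset (Fin n)} (hT : T ∈ s.powerset) : a ∉ T :=
      fun h => ha (mem_powerset.mp hT h)
    have hwithout : ∀ T ∈ s.powerset, ET p n (insert a s \ T) (LS p n T f) v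
        = ET p n (s \ T) (LS p n T (ET p n {a} f)) v := fun T hT => by
      rw [insert_sdiff_of_notMem _ (hnot hT),
        ET_insert_of_notMem fun h => ha (mem_sdiff.mp h).1, ET_singleton_LS_comm (hnot hT)]
    have hwith : ∀ T ∈ s.powerset, ET p n (insert a s \ insert a T) (LS p n (insert a T) f) v
        = ET p n (s \ T) (LS p n T f) v - ET p n (s \ T) (LS p n T (ET p n {a} f)) v :=
      fun T hT => by
        rw [insert_sdiff_insert, sdiff_insert_of_notMem ha, LS_insert_of_notMem (hnot hT),
          ET_sub]
    rw [sum_powerset_insert ha, sum_congr rfl hwithout, sum_congr rfl hwith,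
      sum_sub_distrib, ih, ih, add_sub_cancel]

def combineEquiv (A : Finset (Fin n)) :
    ({i // i ∈ A} → ZMod p) × (Fin n → ZMod p) ≃ (Fin n → ZMod p) × ({i // i ∈ A} → ZMod p) where
  toFun yz := (combine p n A yz.1 yz.2, fun i => yz.2 i)
  invFun wt := (fun i => wt.1 i, combine p n A wt.2 wt.1)
  left_inv yz := by
    refine Prod.ext (funext fun i => by simp [combine]) (funext fun i => ?_)
    by_cases hi : i ∈ A <;> simp [combine, hi]
  right_inv wt := by
    refine Prod.ext (funext fun i => ?_) (funext fun i => by simp [combine])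
    by_cases hi : i ∈ A <;> simp [combine, hi]

lemma sum_sum_comp_combine {M : Type*} [AddCommMonoid M] (A : Finset (Fin n))
    (F : (Fin n → ZMod p) → M) :
    ∑ y : {i // i ∈ A} → ZMod p, ∑ z : Fin n → ZMod p, F (combine p n A y z)
      = Fintype.card ({i // i ∈ A} → ZMod p) • ∑ w, F w := by
  rw [← Fintype.sum_prod_type']
  refine (Equiv.sum_comp (combineEquiv A) (fun wt => F wt.1)).trans ?_
  simp only [Fintype.sum_prod_type, sum_const, card_univ, smul_sum]

lemma sum_norm_ET_sq_le (A : Finset (Fin n)) (g : (Fin n → ZMod p) → ℂ) :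
    ∑ z, ‖ET p n A g z‖ ^ 2 ≤ ∑ w, ‖g w‖ ^ 2 := by
  set c := (Fintype.card ({i // i ∈ A} → ZMod p) : ℝ)
  have hc : 0 < c := Nat.cast_pos.mpr Fintype.card_pos
  have hpoint (z : Fin n → ZMod p) :
      ‖ET p n A g z‖ ^ 2 ≤ (∑ y : {i // i ∈ A} → ZMod p, ‖g (combine p n A y z)‖ ^ 2) / c := by
    have hcs := norm_sum_sq_le_card_mul univ fun y => g (combine p n A y z)
    rw [card_univ] at hcs
    calc ‖ET p n A g z‖ ^ 2 = ‖∑ y : {i // i ∈ A} → ZMod p, g (combine p n A y z)‖ ^ 2 / c ^ 2 := by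
          simp only [ET, norm_div, Complex.norm_natCast, div_pow, c]
      _ ≤ c * (∑ y : {i // i ∈ A} → ZMod p, ‖g (combine p n A y z)‖ ^ 2) / c ^ 2 := by gcongr
      _ = _ := by field_simp
  calc ∑ z, ‖ET p n A g z‖ ^ 2
      ≤ ∑ z, (∑ y : {i // i ∈ A} → ZMod p, ‖g (combine p n A y z)‖ ^ 2) / c :=
        sum_le_sum fun z _ => hpoint z
    _ = ∑ w, ‖g w‖ ^ 2 := by
        rw [← sum_div, sum_comm, sum_sum_comp_combine A fun w => ‖g w‖ ^ 2, nsmul_eq_mul,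
          mul_div_cancel_left₀ _ hc.ne']

lemma N2_ET_le (A : Finset (Fin n)) (g : (Fin n → ZMod p) → ℂ) : N2 p n (ET p n A g) ≤ N2 p n g :=
  div_le_div_of_nonneg_right (sum_norm_ET_sq_le A g) (Nat.cast_nonneg _)

lemma N2_sum_le {ι : Type*} (s : Finset ι) (u : ι → (Fin n → ZMod p) → ℂ) :
    N2 p n (fun z => ∑ i ∈ s, u i z) ≤ s.card * ∑ i ∈ s, N2 p n (u i) := by
  simp only [N2, ← sum_div, ← mul_div_assoc]
  refine div_le_div_of_nonneg_right ?_ (Nat.cast_nonneg _)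
  rw [sum_comm, mul_sum]
  exact sum_le_sum fun z _ => norm_sum_sq_le_card_mul s fun i => u i z

lemma combine_restrict_combine_sdiff {S T : Finset (Fin n)} (hTS : T ⊆ S)
    (x : {i // i ∈ S} → ZMod p) (y : {i // i ∈ S \ T} → ZMod p) (z : Fin n → ZMod p) :
    combine p n T (fun i => x ⟨i.1, hTS i.2⟩) (combine p n (S \ T) y z)
      = combine p n (S \ T) y (combine p n S x z) := by
  funext i
  by_cases hT : i ∈ T
  · simp [combine, hT, hTS hT]
  by_cases hS : i ∈ S <;> simp [combine, hT, hS]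

lemma ET_sdiff_DD {S T : Finset (Fin n)} (hTS : T ⊆ S) (x : {i // i ∈ S} → ZMod p)
    (f : (Fin n → ZMod p) → ℂ) (z : Fin n → ZMod p) :
    ET p n (S \ T) (DD p n T (fun i => x ⟨i.1, hTS i.2⟩) f) z
      = ET p n (S \ T) (LS p n T f) (combine p n S x z) := by
  simp only [ET, DD, combine_restrict_combine_sdiff]

theorem restriction_eq_sum_ET_sdiff_DD (S : Finset (Fin n)) (x : {i // i ∈ S} → ZMod p)
    (f : (Fin n → ZMod p) → ℂ) (z : Fin n → ZMod p) :
    f (combine p n S x z) = ∑ T ∈ S.powerset.attach,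
      ET p n (S \ T.1) (DD p n T.1 (fun i => x ⟨i.1, mem_powerset.mp T.2 i.2⟩) f) z := by
  rw [← sum_powerset_ET_sdiff_LS S f, ← sum_attach]
  exact sum_congr rfl fun T _ => (ET_sdiff_DD _ x f z).symm

end Averaging

theorem stmt4_general (p n : ℕ) [NeZero p] (f : (Fin n → ZMod p) → ℂ)
    (S : Finset (Fin n)) (x : {i // i ∈ S} → ZMod p) (ε : ℝ)
    (h : ∀ T : Finset (Fin n), ∀ hT : T ⊆ S,
      N2 p n (DD p n T (fun i => x ⟨i.1, hT i.2⟩) f) ≤ ε) :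
    N2 p n (fun z => f (combine p n S x z)) ≤ 2 ^ (2 * S.card) * ε := by
  calc N2 p n (fun z => f (combine p n S x z))
      = N2 p n (fun z => ∑ T ∈ S.powerset.attach,
          ET p n (S \ T.1) (DD p n T.1 (fun i => x ⟨i.1, mem_powerset.mp T.2 i.2⟩) f) z) := by
        simp only [← restriction_eq_sum_ET_sdiff_DD]
    _ ≤ S.powerset.attach.card * ∑ T ∈ S.powerset.attach, ε :=
        (N2_sum_le _ _).trans (by gcongr with T; exact (N2_ET_le _ _).trans (h _ _))
    _ = 2 ^ (2 * S.card) * ε := by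
        rw [sum_const, nsmul_eq_mul, card_attach, card_powerset, ← mul_assoc,
          Nat.cast_pow, Nat.cast_ofNat, ← pow_add, two_mul]

/-- smallness of the influences implies smallness of the restriction. -/
theorem stmt4 (p n : ℕ) [NeZero p] [Fact p.Prime] (f : (Fin n → ZMod p) → ℂ)
    (S : Finset (Fin n)) (x : {i // i ∈ S} → ZMod p) (ε : ℝ)
    (h : ∀ T : Finset (Fin n), ∀ hT : T ⊆ S,
      N2 p n (DD p n T (fun i => x ⟨i.1, hT i.2⟩) f) ≤ ε) :
    N2 p n (fun z => f (combine p n S x z)) ≤ 2 ^ (2 * S.card) * ε :=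
  stmt4_general p n f S x ε h
end

section
/- Define a relation on L(W,V) (linear maps between finite-dimensional vector spaces over a field) by X ≤ Y iff rank(Y) = rank(X) + rank(Y − X). Then X ≤ Y holds if and only if Im(X) ≤ Im(Y) and X agrees with Y on Y^{-1}(Im(X)). Moreover, this relation is a partial order on L(W,V). -/
/-! Since `Y = X + (Y - X)`, `range Y ≤ range X ⊔ range (Y - X)`, so the rank equation holds
exactly when this sum is direct and equals `range Y`. Directness says that `(Y - X) w` is `0`
whenever it lies in `range X`, i.e. whenever `Y w` does. For antisymmetry, equal ranges make
the agreement condition hold at every `w`. -/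

open LinearMap Module

/-- The rank-additivity relation `X ≤ Y` iff `rank(Y) = rank(X) + rank(Y - X)`. -/
def rLE (K : Type*) [Field K] {M N : Type*} [AddCommGroup M] [Module K M]
    [AddCommGroup N] [Module K N] (X Y : M →ₗ[K] N) : Prop :=
  Module.finrank K (LinearMap.range Y) =
    Module.finrank K (LinearMap.range X) + Module.finrank K (LinearMap.range (Y - X))

theorem Submodule.finrank_eq_add_iff_of_le_sup {K V : Type*} [Field K] [AddCommGroup V]
    [Module K V] [FiniteDimensional K V] {S T U : Submodule K V} (h : U ≤ S ⊔ T) :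
    finrank K U = finrank K S + finrank K T ↔ S ⊔ T ≤ U ∧ Disjoint S T := by
  have hsum := finrank_sup_add_finrank_inf_eq S T
  have hmono := finrank_mono h
  constructor
  · intro hU
    have hinf : finrank K ↥(S ⊓ T) = 0 := by omega
    have hsup : U = S ⊔ T := eq_of_le_of_finrank_le h (by omega)
    exact ⟨hsup.ge, disjoint_iff.mpr (finrank_eq_zero.mp hinf)⟩
  · rintro ⟨hle, hdisj⟩
    rw [le_antisymm h hle, ← hsum, hdisj.eq_bot, finrank_bot, add_zero]

namespace LinearMap

variable {R M N : Type*} [Ring R] [AddCommGroup M] [Module R M] [AddCommGroup N] [Module R N]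

theorem range_sub_le_of_range_le {X Y : M →ₗ[R] N} (h : range X ≤ range Y) :
    range (Y - X) ≤ range Y := by
  rintro _ ⟨w, rfl⟩
  exact sub_mem ⟨w, rfl⟩ (h ⟨w, rfl⟩)

theorem disjoint_range_range_sub_iff {X Y : M →ₗ[R] N} :
    Disjoint (range X) (range (Y - X)) ↔ ∀ w, Y w ∈ range X → X w = Y w := by
  rw [Submodule.disjoint_def]
  constructor
  · intro h w hw
    have hdiff : (Y - X) w ∈ range X := by simpa using sub_mem hw (mem_range_self X w)
    exact (sub_eq_zero.mp (h _ hdiff ⟨w, rfl⟩)).symm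
  · rintro h _ hv ⟨w, rfl⟩
    have hY : Y w ∈ range X := by simpa using add_mem (mem_range_self X w) hv
    simp [h w hY]

end LinearMap

section rLE

variable {K M N : Type*} [Field K] [AddCommGroup M] [Module K M] [AddCommGroup N] [Module K N]

theorem rLE_refl (X : M →ₗ[K] N) : rLE K X X := by
  rw [rLE, sub_self, range_zero, finrank_bot, add_zero]

variable [FiniteDimensional K N]

theorem rLE_iff {X Y : M →ₗ[K] N} :
    rLE K X Y ↔ range X ≤ range Y ∧ ∀ w, Y w ∈ range X → X w = Y w := by
  have hY : range Y ≤ range X ⊔ range (Y - X) := by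
    simpa using range_add_le X (Y - X)
  rw [rLE, Submodule.finrank_eq_add_iff_of_le_sup hY, disjoint_range_range_sub_iff, sup_le_iff]
  exact ⟨fun ⟨⟨hX, _⟩, hagree⟩ => ⟨hX, hagree⟩,
    fun ⟨hX, hagree⟩ => ⟨⟨hX, range_sub_le_of_range_le hX⟩, hagree⟩⟩

theorem rLE_antisymm {X Y : M →ₗ[K] N} (hXY : rLE K X Y) (hYX : rLE K Y X) : X = Y :=
  LinearMap.ext fun w => (rLE_iff.1 hXY).2 w ((rLE_iff.1 hYX).1 ⟨w, rfl⟩)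

theorem rLE_trans {X Y Z : M →ₗ[K] N} (hXY : rLE K X Y) (hYZ : rLE K Y Z) : rLE K X Z := by
  obtain ⟨hXY, hagreeXY⟩ := rLE_iff.1 hXY
  obtain ⟨hYZ, hagreeYZ⟩ := rLE_iff.1 hYZ
  refine rLE_iff.2 ⟨hXY.trans hYZ, fun w hw => ?_⟩
  have hYw : Y w = Z w := hagreeYZ w (hXY hw)
  rw [hagreeXY w (hYw ▸ hw), hYw]

end rLE

theorem stmt11_general (K V W : Type) [Field K]
    [AddCommGroup V] [Module K V] [FiniteDimensional K V]
    [AddCommGroup W] [Module K W] :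
    (∀ X Y : W →ₗ[K] V, rLE K X Y ↔
      (LinearMap.range X ≤ LinearMap.range Y ∧
        ∀ w : W, Y w ∈ LinearMap.range X → X w = Y w)) ∧
    (∀ X : W →ₗ[K] V, rLE K X X) ∧
    (∀ X Y : W →ₗ[K] V, rLE K X Y → rLE K Y X → X = Y) ∧
    (∀ X Y Z : W →ₗ[K] V, rLE K X Y → rLE K Y Z → rLE K X Z) :=
  ⟨fun _ _ => rLE_iff, rLE_refl, fun _ _ => rLE_antisymm, fun _ _ _ => rLE_trans⟩

/-- characterisation of the rank-additivity relation, and the fact that it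
is a partial order on `L(W,V)`. -/
theorem stmt11 (K V W : Type) [Field K]
    [AddCommGroup V] [Module K V] [FiniteDimensional K V]
    [AddCommGroup W] [Module K W] [FiniteDimensional K W] :
    (∀ X Y : W →ₗ[K] V, rLE K X Y ↔
      (LinearMap.range X ≤ LinearMap.range Y ∧
        ∀ w : W, Y w ∈ LinearMap.range X → X w = Y w)) ∧
    (∀ X : W →ₗ[K] V, rLE K X X) ∧
    (∀ X Y : W →ₗ[K] V, rLE K X Y → rLE K Y X → X = Y) ∧
    (∀ X Y Z : W →ₗ[K] V, rLE K X Y → rLE K Y Z → rLE K X Z) :=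
  stmt11_general K V W
end

section
/- Let V, W be finite-dimensional vector spaces over a field and X, Y ∈ L(W,V) with X ≤ Y (meaning rank(Y) = rank(X) + rank(Y−X)). Let V₁ = Im(X) and W₁ = ker(X). Then rank(Y(W₁, V/V₁)) = rank(Y) − rank(X), where Y(W₁,V/V₁) is the restriction of Y to W₁ composed with the quotient map V → V/V₁. -/
/-!
Write `Z = Y - X`. Since `range Y ≤ range X ⊔ range Z`, rank additivity forces `range X` and
`range Z` to be disjoint; then `ker Y = ker X ⊓ ker Z`, and rank–nullity gives
`ker X ⊔ ker Z = ⊤`, so `Z` maps `ker X` onto `range Z`. On `ker X` the maps `Y` and `Z` agree,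
and the quotient by `range X` is injective on `range Z`, so the rank in question is
`rank Z = rank Y - rank X`.
-/

open LinearMap Module

section Ring

variable {R M N : Type*} [Ring R] [AddCommGroup M] [Module R M] [AddCommGroup N] [Module R N]

theorem LinearMap.ker_add_of_disjoint_range {f g : M →ₗ[R] N}
    (h : Disjoint (range f) (range g)) : ker (f + g) = ker f ⊓ ker g := by
  refine le_antisymm (fun w hw => ?_) (fun w ⟨hf, hg⟩ => by simp_all)
  have hsum : f w + g w = 0 := hw
  have hf : f w = 0 := Submodule.disjoint_def.mp h _ (mem_range_self f w) <| by
    rw [eq_neg_of_add_eq_zero_left hsum, ← map_neg]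
    exact mem_range_self g (-w)
  exact ⟨hf, by simpa [hf] using hsum⟩

theorem Submodule.finrank_map_mkQ_of_disjoint {p q : Submodule R M} (h : Disjoint p q) :
    finrank R (q.map p.mkQ) = finrank R q := by
  have hinj : Function.Injective (p.mkQ ∘ₗ q.subtype) := by
    rw [← ker_eq_bot, ker_comp, ker_mkQ, ← Submodule.disjoint_iff_comap_eq_bot]
    exact h.symm
  rw [← finrank_range_of_inj hinj, range_comp, range_subtype]

end Ring

namespace rLE

variable {K M N : Type*} [Field K] [AddCommGroup M] [Module K M] [FiniteDimensional K M]
  [AddCommGroup N] [Module K N] {X Y : M →ₗ[K] N}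

theorem disjoint_range_sub (h : rLE K X Y) : Disjoint (range X) (range (Y - X)) := by
  have hle : range Y ≤ range X ⊔ range (Y - X) := by
    simpa using range_add_le X (Y - X)
  have hdim := Submodule.finrank_sup_add_finrank_inf_eq (range X) (range (Y - X))
  have hmono := Submodule.finrank_mono hle
  unfold rLE at h
  rw [disjoint_iff, ← Submodule.finrank_eq_zero]
  omega

theorem ker_eq_ker_inf_ker_sub (h : rLE K X Y) : ker Y = ker X ⊓ ker (Y - X) := by
  simpa using ker_add_of_disjoint_range h.disjoint_range_sub

theorem codisjoint_ker_ker_sub (h : rLE K X Y) : Codisjoint (ker X) (ker (Y - X)) := by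
  have hdim := Submodule.finrank_sup_add_finrank_inf_eq (ker X) (ker (Y - X))
  have rnX := X.finrank_range_add_finrank_ker
  have rnY := Y.finrank_range_add_finrank_ker
  have rnZ := (Y - X).finrank_range_add_finrank_ker
  rw [← h.ker_eq_ker_inf_ker_sub] at hdim
  unfold rLE at h
  rw [codisjoint_iff]
  apply Submodule.eq_top_of_finrank_eq
  omega

theorem map_ker_eq_range_sub (h : rLE K X Y) : (ker X).map (Y - X) = range (Y - X) :=
  Submodule.map_eq_range_iff.mpr h.codisjoint_ker_ker_sub

end rLE

theorem stmt13_general (K V W : Type) [Field K]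
    [AddCommGroup V] [Module K V]
    [AddCommGroup W] [Module K W] [FiniteDimensional K W]
    (X Y : W →ₗ[K] V) (h : rLE K X Y) :
    Module.finrank K
        (LinearMap.range ((LinearMap.range X).mkQ ∘ₗ (Y ∘ₗ (LinearMap.ker X).subtype))) =
      Module.finrank K (LinearMap.range Y) - Module.finrank K (LinearMap.range X) := by
  have hker : Y ∘ₗ (ker X).subtype = (Y - X) ∘ₗ (ker X).subtype := by
    ext w
    simp [mem_ker.mp w.2]
  rw [hker, range_comp, range_comp, Submodule.range_subtype, h.map_ker_eq_range_sub,
    Submodule.finrank_map_mkQ_of_disjoint h.disjoint_range_sub, h, Nat.add_sub_cancel_left]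

/-- if `X ≤ Y`, then `rank(Y(ker X, V/Im X)) = rank(Y) − rank(X)`. -/
theorem stmt13 (K V W : Type) [Field K]
    [AddCommGroup V] [Module K V] [FiniteDimensional K V]
    [AddCommGroup W] [Module K W] [FiniteDimensional K W]
    (X Y : W →ₗ[K] V) (h : rLE K X Y) :
    Module.finrank K
        (LinearMap.range ((LinearMap.range X).mkQ ∘ₗ (Y ∘ₗ (LinearMap.ker X).subtype))) =
      Module.finrank K (LinearMap.range Y) - Module.finrank K (LinearMap.range X) :=
  stmt13_general K V W X Y h
end

section
/- Let q be a prime power, V, W finite-dimensional F_q-vector spaces, and let Y ∈ L(W,V) with ker(Y) ⊆ W₁ and Im(Y) ⊇ V₁, where V₁ ≤ V, W₁ ≤ W. Then there exists a unique triple (W₂, V₂, X) with W₁ ≤ W₂ ≤ W, V₂ ≤ V₁, X ∈ L(W₂, V₁/V₂) a linear surjection with kernel W₁, such that Y^{-1}(V₂) ⊆ W₂ and X ≤ Y(W₂, V/V₂). Explicitly, W₂ = W₁ + Y^{-1}(V₁) and V₂ = Y(W₁) ∩ V₁. -/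
/-!
Write `U = Y⁻¹(V₁)` and `Ȳ = Y(W₂, V/V₂)`. Rank additivity `X ≤ Ȳ` says exactly that `range X`
and `range (Ȳ - X)` are independent and `range X ⊆ range Ȳ`; in particular `X x = Ȳ x` whenever
`Ȳ x ∈ range X = V₁/V₂`. So `X` vanishes on `W₁` and equals `Y mod V₂` on `W₂ ∩ U`. Comparing the
two descriptions, together with `Y⁻¹(V₂) ⊆ W₂`, forces `V₂ = Y(W₁) ∩ V₁`, `U ⊆ W₂` and then
`W₂ = W₁ + U`, on which `X` is determined. Conversely, `0` on `W₁` and `Y mod V₂` on `U` agree on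
`W₁ ∩ U` and glue to a map on `W₁ + U`; it satisfies rank additivity because `V₁/V₂` and
`Y(W₁)/V₂` meet trivially in `V/V₂`.
-/

open LinearMap Module

/-- The property required of the triple `(W₂, V₂, X)` in STATEMENT 14: `W₁ ≤ W₂`,
`V₂ ≤ V₁`, `X : W₂ → V₁/V₂ ⊆ V/V₂` is a surjection onto `V₁/V₂` with kernel `W₁`,
`Y⁻¹(V₂) ⊆ W₂`, and `X ≤ Y(W₂, V/V₂)`. -/
def P14 (p s : ℕ) [Fact p.Prime] {V W : Type}
    [AddCommGroup V] [Module (GaloisField p s) V]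
    [AddCommGroup W] [Module (GaloisField p s) W]
    (Y : W →ₗ[GaloisField p s] V)
    (V₁ : Submodule (GaloisField p s) V) (W₁ : Submodule (GaloisField p s) W)
    (t : Σ W₂ : Submodule (GaloisField p s) W, Σ V₂ : Submodule (GaloisField p s) V,
      (↥W₂ →ₗ[GaloisField p s] V ⧸ V₂)) : Prop :=
  W₁ ≤ t.1 ∧ t.2.1 ≤ V₁ ∧
  LinearMap.range t.2.2 = V₁.map t.2.1.mkQ ∧
  LinearMap.ker t.2.2 = W₁.comap t.1.subtype ∧
  (∀ w : W, Y w ∈ t.2.1 → w ∈ t.1) ∧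
  rLE (GaloisField p s) t.2.2 (t.2.1.mkQ ∘ₗ (Y ∘ₗ t.1.subtype))

open Submodule

section Ring

variable {R M N : Type*} [Ring R] [AddCommGroup M] [Module R M] [AddCommGroup N] [Module R N]

theorem range_le_sup_range_sub (f g : M →ₗ[R] N) : range g ≤ range f ⊔ range (g - f) := by
  rintro _ ⟨m, rfl⟩
  rw [← add_sub_cancel (f m) (g m)]
  exact add_mem_sup (mem_range_self f m) (mem_range_self (g - f) m)

theorem Submodule.disjoint_map_mkQ_inf (P Q : Submodule R N) :
    Disjoint (P.map (P ⊓ Q).mkQ) (Q.map (P ⊓ Q).mkQ) := by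
  rw [disjoint_def]
  rintro _ ⟨p, hp, rfl⟩ ⟨q, hq, hqp⟩
  have hpq : q - p ∈ P ⊓ Q := (Submodule.Quotient.eq _).1 hqp
  have hpQ : p ∈ Q := by simpa using sub_mem hq hpq.2
  exact (Submodule.Quotient.mk_eq_zero _).2 ⟨hp, hpQ⟩

variable {Y : M →ₗ[R] N} {V₁ : Submodule R N} {W₁ : Submodule R M}

theorem mkQ_map_inf_apply_eq_zero {w : M} (hw₁ : w ∈ W₁) (hw : w ∈ V₁.comap Y) :
    (W₁.map Y ⊓ V₁).mkQ (Y w) = 0 :=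
  (Submodule.Quotient.mk_eq_zero _).2 ⟨mem_map_of_mem hw₁, hw⟩

variable (Y V₁ W₁) in
noncomputable def gluedMap : ↥(W₁ ⊔ V₁.comap Y) →ₗ[R] N ⧸ (W₁.map Y ⊓ V₁) :=
  (LinearPMap.sup ⟨W₁, 0⟩ ⟨V₁.comap Y, (W₁.map Y ⊓ V₁).mkQ ∘ₗ Y ∘ₗ (V₁.comap Y).subtype⟩
    fun a u hau => (mkQ_map_inf_apply_eq_zero (hau ▸ a.2) u.2).symm).toFun

theorem gluedMap_apply {a u : M} (ha : a ∈ W₁) (hu : u ∈ V₁.comap Y) (x : ↥(W₁ ⊔ V₁.comap Y))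
    (hx : (x : M) = a + u) : gluedMap Y V₁ W₁ x = (W₁.map Y ⊓ V₁).mkQ (Y u) :=
  (LinearPMap.sup_apply (f := ⟨W₁, 0⟩)
    (g := ⟨V₁.comap Y, (W₁.map Y ⊓ V₁).mkQ ∘ₗ Y ∘ₗ (V₁.comap Y).subtype⟩)
    (fun a u hau => (mkQ_map_inf_apply_eq_zero (hau ▸ a.2) u.2).symm)
    ⟨a, ha⟩ ⟨u, hu⟩ x hx.symm).trans (zero_add _)

theorem range_gluedMap (him : V₁ ≤ range Y) :
    range (gluedMap Y V₁ W₁) = V₁.map (W₁.map Y ⊓ V₁).mkQ := by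
  refine le_antisymm ?_ ?_
  · rintro _ ⟨x, rfl⟩
    obtain ⟨a, ha, u, hu, hx⟩ := mem_sup.1 x.2
    rw [gluedMap_apply ha hu x hx.symm]
    exact mem_map_of_mem hu
  · rintro _ ⟨v, hv, rfl⟩
    obtain ⟨u, rfl⟩ := him hv
    exact ⟨⟨u, mem_sup_right hv⟩, gluedMap_apply (zero_mem _) hv _ (zero_add u).symm⟩

theorem ker_gluedMap (hker : LinearMap.ker Y ≤ W₁) :
    LinearMap.ker (gluedMap Y V₁ W₁) = W₁.comap (W₁ ⊔ V₁.comap Y).subtype := by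
  ext x
  obtain ⟨a, ha, u, hu, hx⟩ := mem_sup.1 x.2
  rw [mem_ker, gluedMap_apply ha hu x hx.symm, mem_comap, subtype_apply, ← hx,
    add_mem_cancel_left ha, mkQ_apply, Submodule.Quotient.mk_eq_zero]
  exact ⟨fun h => (comap_map_eq_self hker).le h.1, fun h => ⟨mem_map_of_mem h, hu⟩⟩

theorem range_gluedMap_le_range :
    range (gluedMap Y V₁ W₁) ≤ range ((W₁.map Y ⊓ V₁).mkQ ∘ₗ Y ∘ₗ (W₁ ⊔ V₁.comap Y).subtype) := by
  rintro _ ⟨x, rfl⟩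
  obtain ⟨a, ha, u, hu, hx⟩ := mem_sup.1 x.2
  exact ⟨⟨u, mem_sup_right hu⟩, (gluedMap_apply ha hu x hx.symm).symm⟩

theorem range_sub_gluedMap_le :
    range ((W₁.map Y ⊓ V₁).mkQ ∘ₗ Y ∘ₗ (W₁ ⊔ V₁.comap Y).subtype - gluedMap Y V₁ W₁) ≤
      (W₁.map Y).map (W₁.map Y ⊓ V₁).mkQ := by
  rintro _ ⟨x, rfl⟩
  obtain ⟨a, ha, u, hu, hx⟩ := mem_sup.1 x.2
  refine ⟨Y a, mem_map_of_mem ha, ?_⟩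
  simp [gluedMap_apply ha hu x hx.symm, ← hx]

end Ring

section Field

variable {K V W : Type*} [Field K] [AddCommGroup V] [Module K V] [AddCommGroup W] [Module K W]

section RankAdditivity

variable {M N : Type*} [AddCommGroup M] [Module K M] [AddCommGroup N] [Module K N]
  [FiniteDimensional K M] {f g : M →ₗ[K] N}

theorem rLE_iff_s14 : rLE K f g ↔ Disjoint (range f) (range (g - f)) ∧ range f ≤ range g := by
  have hdim := finrank_sup_add_finrank_inf_eq (range f) (range (g - f))
  have hsup := range_le_sup_range_sub f g
  constructor
  · intro h
    unfold rLE at h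
    have hmono := finrank_mono hsup
    have hinf : finrank K ↥(range f ⊓ range (g - f)) = 0 := by omega
    have heq : range g = range f ⊔ range (g - f) := eq_of_le_of_finrank_le hsup (by omega)
    exact ⟨disjoint_iff.2 (finrank_eq_zero.1 hinf), heq ▸ le_sup_left⟩
  · rintro ⟨hdisj, hle⟩
    have hsub : range (g - f) ≤ range g := by
      rintro _ ⟨m, rfl⟩
      exact sub_mem (mem_range_self g m) (hle (mem_range_self f m))
    rw [disjoint_iff.1 hdisj, finrank_bot, add_zero] at hdim
    unfold rLE
    rw [le_antisymm hsup (sup_le hle hsub), hdim]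

theorem rLE.apply_eq_of_mem_range (h : rLE K f g) {x : M} (hx : g x ∈ range f) : f x = g x :=
  (sub_eq_zero.1 <| disjoint_def.1 (rLE_iff_s14.1 h).1 _
    (sub_mem hx (mem_range_self f x)) (mem_range_self (g - f) x)).symm

end RankAdditivity

structure IsAdmissibleTriple (Y : W →ₗ[K] V) (V₁ : Submodule K V) (W₁ : Submodule K W)
    {W₂ : Submodule K W} {V₂ : Submodule K V} (X : W₂ →ₗ[K] V ⧸ V₂) : Prop where
  W₁_le : W₁ ≤ W₂
  V₂_le : V₂ ≤ V₁
  range_eq : range X = V₁.map V₂.mkQ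
  ker_eq : ker X = W₁.comap W₂.subtype
  mem_of_apply_mem : ∀ w : W, Y w ∈ V₂ → w ∈ W₂
  rank_add : rLE K X (V₂.mkQ ∘ₗ Y ∘ₗ W₂.subtype)

variable {Y : W →ₗ[K] V} {V₁ : Submodule K V} {W₁ : Submodule K W}

theorem isAdmissibleTriple_gluedMap [FiniteDimensional K W] (hker : LinearMap.ker Y ≤ W₁)
    (him : V₁ ≤ range Y) : IsAdmissibleTriple Y V₁ W₁ (gluedMap Y V₁ W₁) where
  W₁_le := le_sup_left
  V₂_le := inf_le_right
  range_eq := range_gluedMap him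
  ker_eq := ker_gluedMap hker
  mem_of_apply_mem _ hw := mem_sup_right hw.2
  rank_add := rLE_iff_s14.2
    ⟨(disjoint_map_mkQ_inf (W₁.map Y) V₁).symm.mono (range_gluedMap him).le range_sub_gluedMap_le,
      range_gluedMap_le_range⟩

namespace IsAdmissibleTriple

variable {V₂ : Submodule K V} {W₂ : Submodule K W} {X : W₂ →ₗ[K] V ⧸ V₂}
  (h : IsAdmissibleTriple Y V₁ W₁ X)
include h

theorem apply_eq_zero_iff {x : W₂} : X x = 0 ↔ (x : W) ∈ W₁ := by
  rw [← mem_ker, h.ker_eq, mem_comap, subtype_apply]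

variable [FiniteDimensional K W]

theorem apply_eq {x : W₂} (hx : Y x ∈ V₁) : X x = V₂.mkQ (Y x) :=
  h.rank_add.apply_eq_of_mem_range (by rw [h.range_eq]; exact mem_map_of_mem hx)

theorem comap_le : V₁.comap Y ≤ W₂ := by
  intro w hw
  obtain ⟨z, hz⟩ : V₂.mkQ (Y w) ∈ range (V₂.mkQ ∘ₗ Y ∘ₗ W₂.subtype) :=
    (rLE_iff_s14.1 h.rank_add).2 (h.range_eq ▸ mem_map_of_mem hw)
  have hwz : w - z ∈ W₂ := h.mem_of_apply_mem _ (by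
    rw [map_sub]
    exact (Submodule.Quotient.eq V₂).1 hz.symm)
  simpa using add_mem hwz z.2

theorem V₂_eq (him : V₁ ≤ range Y) : V₂ = W₁.map Y ⊓ V₁ := by
  refine le_antisymm (fun v hv => ?_) ?_
  · obtain ⟨w, rfl⟩ := him (h.V₂_le hv)
    have hw : w ∈ W₂ := h.mem_of_apply_mem w hv
    have hXw : X ⟨w, hw⟩ = 0 := by
      rw [h.apply_eq (h.V₂_le hv)]
      exact (Submodule.Quotient.mk_eq_zero V₂).2 hv
    exact ⟨mem_map_of_mem (h.apply_eq_zero_iff.1 hXw), h.V₂_le hv⟩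
  · rintro _ ⟨⟨a, ha, rfl⟩, hv⟩
    have hXa := h.apply_eq (x := ⟨a, h.W₁_le ha⟩) hv
    rw [h.apply_eq_zero_iff.2 ha] at hXa
    exact (Submodule.Quotient.mk_eq_zero V₂).1 hXa.symm

theorem W₂_eq (him : V₁ ≤ range Y) : W₂ = W₁ ⊔ V₁.comap Y := by
  refine le_antisymm (fun x hx => ?_) (sup_le h.W₁_le h.comap_le)
  obtain ⟨v, hv, hXx⟩ : X ⟨x, hx⟩ ∈ V₁.map V₂.mkQ := h.range_eq ▸ mem_range_self X _
  obtain ⟨u, rfl⟩ := him hv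
  have hXu : X (⟨x, hx⟩ - ⟨u, h.comap_le hv⟩) = 0 := by
    rw [map_sub, h.apply_eq (x := ⟨u, h.comap_le hv⟩) hv, ← hXx, sub_self]
  simpa using add_mem_sup (h.apply_eq_zero_iff.1 hXu) (show u ∈ V₁.comap Y from hv)

end IsAdmissibleTriple

theorem IsAdmissibleTriple.eq_gluedMap [FiniteDimensional K W]
    {X : ↥(W₁ ⊔ V₁.comap Y) →ₗ[K] V ⧸ (W₁.map Y ⊓ V₁)}
    (h : IsAdmissibleTriple Y V₁ W₁ X) : X = gluedMap Y V₁ W₁ := by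
  refine LinearMap.ext fun x => ?_
  obtain ⟨a, ha, u, hu, hx⟩ := mem_sup.1 x.2
  have hsplit : x = ⟨a, mem_sup_left ha⟩ + ⟨u, mem_sup_right hu⟩ := Subtype.ext hx.symm
  rw [gluedMap_apply ha hu x hx.symm, hsplit, map_add, h.apply_eq_zero_iff.2 ha,
    h.apply_eq (x := ⟨u, _⟩) hu, zero_add]

end Field

theorem p14_iff {p s : ℕ} [Fact p.Prime] {V W : Type} [AddCommGroup V]
    [Module (GaloisField p s) V] [AddCommGroup W] [Module (GaloisField p s) W]
    {Y : W →ₗ[GaloisField p s] V} {V₁ : Submodule (GaloisField p s) V}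
    {W₁ : Submodule (GaloisField p s) W}
    (t : Σ W₂ : Submodule (GaloisField p s) W, Σ V₂ : Submodule (GaloisField p s) V,
      (↥W₂ →ₗ[GaloisField p s] V ⧸ V₂)) :
    P14 p s Y V₁ W₁ t ↔ IsAdmissibleTriple Y V₁ W₁ t.2.2 :=
  ⟨fun ⟨h₁, h₂, h₃, h₄, h₅, h₆⟩ => ⟨h₁, h₂, h₃, h₄, h₅, h₆⟩,
    fun h => ⟨h.1, h.2, h.3, h.4, h.5, h.6⟩⟩

theorem stmt14_general (p s : ℕ) [Fact p.Prime]
    (V W : Type) [AddCommGroup V] [Module (GaloisField p s) V]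
    [AddCommGroup W] [Module (GaloisField p s) W]
    [FiniteDimensional (GaloisField p s) W]
    (Y : W →ₗ[GaloisField p s] V)
    (V₁ : Submodule (GaloisField p s) V) (W₁ : Submodule (GaloisField p s) W)
    (hker : LinearMap.ker Y ≤ W₁) (him : V₁ ≤ LinearMap.range Y) :
    (∃! t : Σ W₂ : Submodule (GaloisField p s) W, Σ V₂ : Submodule (GaloisField p s) V,
        (↥W₂ →ₗ[GaloisField p s] V ⧸ V₂), P14 p s Y V₁ W₁ t) ∧
    (∀ t : Σ W₂ : Submodule (GaloisField p s) W, Σ V₂ : Submodule (GaloisField p s) V,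
        (↥W₂ →ₗ[GaloisField p s] V ⧸ V₂), P14 p s Y V₁ W₁ t →
      t.1 = W₁ ⊔ V₁.comap Y ∧ t.2.1 = (W₁.map Y) ⊓ V₁) := by
  have hcanon : ∀ t, P14 p s Y V₁ W₁ t → t.1 = W₁ ⊔ V₁.comap Y ∧ t.2.1 = W₁.map Y ⊓ V₁ :=
    fun t ht => ⟨((p14_iff t).1 ht).W₂_eq him, ((p14_iff t).1 ht).V₂_eq him⟩
  refine ⟨⟨⟨_, _, gluedMap Y V₁ W₁⟩, (p14_iff _).2 (isAdmissibleTriple_gluedMap hker him), ?_⟩,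
    hcanon⟩
  rintro ⟨W₂, V₂, X⟩ ht
  obtain ⟨rfl, rfl⟩ := hcanon _ ht
  obtain rfl := ((p14_iff _).1 ht).eq_gluedMap
  rfl

/-- existence and uniqueness of the triple `(W₂, V₂, X)`, with the
explicit description `W₂ = W₁ + Y⁻¹(V₁)` and `V₂ = Y(W₁) ∩ V₁`. -/
theorem stmt14 (p s : ℕ) [Fact p.Prime] (hs : s ≠ 0)
    (V W : Type) [AddCommGroup V] [Module (GaloisField p s) V]
    [FiniteDimensional (GaloisField p s) V]
    [AddCommGroup W] [Module (GaloisField p s) W]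
    [FiniteDimensional (GaloisField p s) W]
    (Y : W →ₗ[GaloisField p s] V)
    (V₁ : Submodule (GaloisField p s) V) (W₁ : Submodule (GaloisField p s) W)
    (hker : LinearMap.ker Y ≤ W₁) (him : V₁ ≤ LinearMap.range Y) :
    (∃! t : Σ W₂ : Submodule (GaloisField p s) W, Σ V₂ : Submodule (GaloisField p s) V,
        (↥W₂ →ₗ[GaloisField p s] V ⧸ V₂), P14 p s Y V₁ W₁ t) ∧
    (∀ t : Σ W₂ : Submodule (GaloisField p s) W, Σ V₂ : Submodule (GaloisField p s) V,
        (↥W₂ →ₗ[GaloisField p s] V ⧸ V₂), P14 p s Y V₁ W₁ t →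
      t.1 = W₁ ⊔ V₁.comap Y ∧ t.2.1 = (W₁.map Y) ⊓ V₁) :=
  stmt14_general p s V W Y V₁ W₁ hker him
end

section
/- Let q be a prime power, V, W finite-dimensional F_q-vector spaces, v ∈ V nonzero, and X ∈ L(W,V) with v ∉ Im(X). If V' is a uniformly random codimension-one subspace of V not containing v, then Pr[Im(X) ⊆ V'] = q^{-rank(X)}. -/
/-!
A hyperplane `H` with `v ∉ H` is the kernel of exactly one functional `φ` with `φ v = 1`, and
these functionals form a translate of the kernel of evaluation at `v`, so over `𝔽_q` there are
`q ^ (dim V - 1)` such hyperplanes. Those containing `U = Im X` are the hyperplanes of `V ⧸ U`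
avoiding the image of `v`, which is nonzero because `v ∉ U`; there are `q ^ (dim V - rank X - 1)`
of them.
-/

open LinearMap Module

section

variable {K V : Type*} [Field K] [AddCommGroup V] [Module K V]

lemma Module.Dual.finrank_quotient_ker_eq_one {φ : Dual K V} {v : V} (hφv : φ v = 1) :
    finrank K (V ⧸ ker φ) = 1 := by
  have hφ : Function.Surjective φ := fun c => ⟨c • v, by simp [hφv]⟩
  rw [(φ.quotKerEquivOfSurjective hφ).finrank_eq, finrank_self]

lemma Submodule.exists_dual_ker_eq_apply_eq_one {H : Submodule K V} {v : V}
    (hH : finrank K (V ⧸ H) = 1) (hvH : v ∉ H) : ∃ φ : Dual K V, ker φ = H ∧ φ v = 1 := by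
  have hv : H.mkQ v ≠ 0 := by simpa [Submodule.Quotient.mk_eq_zero] using hvH
  let e : K ≃ₗ[K] V ⧸ H := (LinearEquiv.toSpanNonzeroSingleton K _ _ hv).trans
    (LinearEquiv.ofTop _ ((finrank_eq_one_iff_of_nonzero _ hv).mp hH))
  refine ⟨e.symm.toLinearMap ∘ₗ H.mkQ, ?_, e.symm_apply_eq.mpr ?_⟩
  · rw [ker_comp, LinearEquiv.ker, Submodule.comap_bot, Submodule.ker_mkQ]
  · exact (one_smul K _).symm

lemma Submodule.finrank_quotient_comap_mkQ (U : Submodule K V) (H : Submodule K (V ⧸ U)) :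
    finrank K (V ⧸ H.comap U.mkQ) = finrank K ((V ⧸ U) ⧸ H) := by
  have hker : ker (H.mkQ ∘ₗ U.mkQ) = H.comap U.mkQ := by rw [ker_comp, Submodule.ker_mkQ]
  have hsurj : Function.Surjective (H.mkQ ∘ₗ U.mkQ) :=
    H.mkQ_surjective.comp U.mkQ_surjective
  exact ((Submodule.quotEquivOfEq _ _ hker).symm.trans
    ((H.mkQ ∘ₗ U.mkQ).quotKerEquivOfSurjective hsurj)).finrank_eq

noncomputable def Submodule.hyperplaneNotMemQuotientEquiv (U : Submodule K V) (v : V) :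
    {H : Submodule K (V ⧸ U) // finrank K ((V ⧸ U) ⧸ H) = 1 ∧ U.mkQ v ∉ H} ≃
      {H : Submodule K V // finrank K (V ⧸ H) = 1 ∧ v ∉ H ∧ U ≤ H} :=
  ((Equiv.subtypeEquiv (q := fun H => finrank K (V ⧸ H.1) = 1 ∧ v ∉ H.1)
      U.comapMkQRelIso.toEquiv fun H => by
        show _ ↔ finrank K (V ⧸ H.comap U.mkQ) = 1 ∧ v ∉ H.comap U.mkQ
        rw [U.finrank_quotient_comap_mkQ H, Submodule.mem_comap]).trans
    (Equiv.subtypeSubtypeEquivSubtypeInter (· ∈ Set.Ici U)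
      fun H => finrank K (V ⧸ H) = 1 ∧ v ∉ H)).trans
    (Equiv.subtypeEquivRight fun _ => by rw [Set.mem_Ici]; tauto)

variable [FiniteDimensional K V]

noncomputable def Module.Dual.equivHyperplaneNotMem (v : V) :
    {φ : Dual K V // φ v = 1} ≃ {H : Submodule K V // finrank K (V ⧸ H) = 1 ∧ v ∉ H} :=
  Equiv.ofBijective (fun φ => ⟨ker φ.1, Dual.finrank_quotient_ker_eq_one φ.2, by simp [φ.2]⟩) <| by
    refine ⟨fun φ ψ h => Subtype.ext ?_, fun H => ?_⟩
    · exact eq_of_ker_eq_of_apply_eq v (congrArg Subtype.val h) (φ.2.trans ψ.2.symm) (by simp [φ.2])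
    · obtain ⟨φ, hφH, hφv⟩ := Submodule.exists_dual_ker_eq_apply_eq_one H.2.1 H.2.2
      exact ⟨⟨φ, hφv⟩, Subtype.ext hφH⟩

lemma Module.Dual.natCard_apply_eq_one {v : V} (hv : v ≠ 0) :
    Nat.card {φ : Dual K V // φ v = 1} = Nat.card K ^ (finrank K V - 1) := by
  obtain ⟨φ₀, hφ₀⟩ := Projective.exists_dual_eq_one K hv
  have hker : finrank K (ker (Dual.eval K V v)) + 1 = finrank K V := by
    refine (finrank_ker_add_one_of_ne_zero fun h => ?_).trans Subspace.dual_finrank_eq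
    simpa [hφ₀] using congrArg (· φ₀) h
  let e : {φ : Dual K V // φ v = 1} ≃ ker (Dual.eval K V v) :=
    { toFun φ := ⟨φ.1 - φ₀, by simp [φ.2, hφ₀]⟩
      invFun φ := ⟨φ.1 + φ₀, by simp [show φ.1 v = 0 from φ.2, hφ₀]⟩
      left_inv φ := by simp
      right_inv φ := by simp }
  rw [Nat.card_congr e, natCard_eq_pow_finrank (K := K)]
  congr 1
  omega

lemma Submodule.natCard_hyperplane_notMem (v : V) (hv : v ≠ 0) :
    Nat.card {H : Submodule K V // finrank K (V ⧸ H) = 1 ∧ v ∉ H} =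
      Nat.card K ^ (finrank K V - 1) := by
  rw [← Nat.card_congr (Dual.equivHyperplaneNotMem v), Dual.natCard_apply_eq_one hv]

theorem Submodule.natCard_hyperplane_notMem_le_mul_pow_finrank {U : Submodule K V} {v : V}
    (hvU : v ∉ U) :
    Nat.card {H : Submodule K V // finrank K (V ⧸ H) = 1 ∧ v ∉ H ∧ U ≤ H} *
        Nat.card K ^ finrank K U =
      Nat.card {H : Submodule K V // finrank K (V ⧸ H) = 1 ∧ v ∉ H} := by
  have hv : U.mkQ v ≠ 0 := by simpa [Submodule.Quotient.mk_eq_zero] using hvU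
  have : Nontrivial (V ⧸ U) := nontrivial_of_ne _ _ hv
  have hdim := U.finrank_quotient_add_finrank
  have hpos : 0 < finrank K (V ⧸ U) := finrank_pos
  rw [← Nat.card_congr (U.hyperplaneNotMemQuotientEquiv v), natCard_hyperplane_notMem _ hv,
    natCard_hyperplane_notMem v (ne_of_mem_of_not_mem U.zero_mem hvU).symm, ← pow_add]
  congr 1
  omega

end

theorem stmt15_general (p s : ℕ) [Fact p.Prime]
    (V W : Type) [AddCommGroup V] [Module (GaloisField p s) V]
    [FiniteDimensional (GaloisField p s) V]
    [AddCommGroup W] [Module (GaloisField p s) W]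
    (v : V) (X : W →ₗ[GaloisField p s] V)
    (hX : v ∉ LinearMap.range X) :
    Nat.card {V' : Submodule (GaloisField p s) V //
        Module.finrank (GaloisField p s) (V ⧸ V') = 1 ∧ v ∉ V' ∧
          LinearMap.range X ≤ V'} *
      (Nat.card (GaloisField p s)) ^ (Module.finrank (GaloisField p s) (LinearMap.range X)) =
    Nat.card {V' : Submodule (GaloisField p s) V //
        Module.finrank (GaloisField p s) (V ⧸ V') = 1 ∧ v ∉ V'} :=
  Submodule.natCard_hyperplane_notMem_le_mul_pow_finrank hX

/-- if `v ∉ Im(X)`, then a uniformly random codimension-one subspace `V'`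
not containing `v` contains `Im(X)` with probability `q^{-rank(X)}`; equivalently, the
counting identity below. -/
theorem stmt15 (p s : ℕ) [Fact p.Prime] (hs : s ≠ 0)
    (V W : Type) [AddCommGroup V] [Module (GaloisField p s) V]
    [FiniteDimensional (GaloisField p s) V]
    [AddCommGroup W] [Module (GaloisField p s) W]
    [FiniteDimensional (GaloisField p s) W]
    (v : V) (hv : v ≠ 0) (X : W →ₗ[GaloisField p s] V)
    (hX : v ∉ LinearMap.range X) :
    Nat.card {V' : Submodule (GaloisField p s) V //
        Module.finrank (GaloisField p s) (V ⧸ V') = 1 ∧ v ∉ V' ∧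
          LinearMap.range X ≤ V'} *
      (Nat.card (GaloisField p s)) ^ (Module.finrank (GaloisField p s) (LinearMap.range X)) =
    Nat.card {V' : Submodule (GaloisField p s) V //
        Module.finrank (GaloisField p s) (V ⧸ V') = 1 ∧ v ∉ V'} :=
  stmt15_general p s V W v X hX
end

section
/- Let q be a prime power and define a_1 = 1 and a_k = 1 − ∑_{i=1}^{k−1} a_i · [k choose i]_q for k ≥ 2, where [k choose i]_q is the Gaussian binomial coefficient. Then |a_k| ≤ q^{2k²} for all k ≥ 1. Moreover, for any finite-dimensional F_q-vector space V' with 1 ≤ dim(V') ≤ d, we have ∑_{i=1}^{d} a_i · [dim(V') choose i]_q = 1. -/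
open Finset Module

/-!
Counting linearly independent `i`-tuples of `F_q^k` subspace by subspace gives
`[k choose i]_q · ∏_{j<i} (q^i - q^j) = ∏_{j<i} (q^k - q^j)`,
hence `[k choose i]_q ≤ q^{i(k-i+1)}`. With this, induction on `k` in the recurrence gives
`|a_k| ≤ 1 + (k - 1) q^{2k² - 2k} ≤ q^{2k²}`.
The identity for `V'` is the recurrence at `k = dim V'`: the number of `i`-dimensional subspaces
depends only on the dimension, vanishes for `i > dim V'` and is `1` for `i = dim V'`.
-/

/-- The number of `i`-dimensional subspaces of an `F_q`-vector space `M`; for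
`M = F_q^k` this is the Gaussian binomial coefficient `[k choose i]_q`. -/
noncomputable def numSub (p s : ℕ) [Fact p.Prime] (M : Type*) [AddCommGroup M]
    [Module (GaloisField p s) M] (i : ℕ) : ℕ :=
  Nat.card {P : Submodule (GaloisField p s) M // Module.finrank (GaloisField p s) P = i}

lemma pow_pred_le_pow_sub_pow {q i j : ℕ} (hq : 2 ≤ q) (hj : j < i) :
    q ^ (i - 1) ≤ q ^ i - q ^ j := by
  obtain ⟨m, rfl⟩ : ∃ m, i = m + 1 := ⟨i - 1, by omega⟩
  have hjm : q ^ j ≤ q ^ m := Nat.pow_le_pow_right (by omega) (by omega)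
  have hm : 2 * q ^ m ≤ q ^ (m + 1) := by rw [pow_succ']; exact Nat.mul_le_mul_right _ hq
  rw [Nat.add_sub_cancel]
  omega

section Subspaces

variable {K M : Type*} [DivisionRing K] [AddCommGroup M] [Module K M]

lemma card_subspaces_congr {M' : Type*} [AddCommGroup M'] [Module K M'] (e : M ≃ₗ[K] M')
    (i : ℕ) :
    Nat.card {P : Submodule K M // finrank K P = i} =
      Nat.card {P : Submodule K M' // finrank K P = i} :=
  Nat.card_congr <| (Submodule.orderIsoMapComap e).toEquiv.subtypeEquiv fun P => by
    show _ ↔ finrank K (P.map (e : M →ₗ[K] M')) = i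
    rw [← (e.submoduleMap P).finrank_eq]

variable [FiniteDimensional K M]

lemma card_subspaces_eq_zero_of_finrank_lt {i : ℕ} (hi : finrank K M < i) :
    Nat.card {P : Submodule K M // finrank K P = i} = 0 :=
  have : IsEmpty {P : Submodule K M // finrank K P = i} :=
    ⟨fun P => hi.not_ge (P.2 ▸ P.1.finrank_le)⟩
  Nat.card_of_isEmpty

lemma card_subspaces_finrank_self :
    Nat.card {P : Submodule K M // finrank K P = finrank K M} = 1 :=
  Nat.card_eq_one_iff_unique.mpr
    ⟨⟨fun P Q => Subtype.ext <| by
      rw [Submodule.eq_top_of_finrank_eq P.2, Submodule.eq_top_of_finrank_eq Q.2]⟩,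
      ⟨⟨⊤, finrank_top K M⟩⟩⟩

def linearIndependentSpanEquiv {i : ℕ} (P : {P : Submodule K M // finrank K P = i}) :
    {s : {s : Fin i → M // LinearIndependent K s} // Submodule.span K (Set.range s.1) = P.1} ≃
      {t : Fin i → P.1 // LinearIndependent K t} where
  toFun s := ⟨fun j => ⟨s.1.1 j, s.2.le (Submodule.subset_span ⟨j, rfl⟩)⟩,
    .of_comp P.1.subtype s.1.2⟩
  invFun t := ⟨⟨P.1.subtype ∘ t.1, t.2.map' _ P.1.ker_subtype⟩, by
    refine Submodule.eq_of_le_of_finrank_eq ?_ ?_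
    · rw [Submodule.span_le, Set.range_comp]
      rintro _ ⟨_, ⟨j, rfl⟩, rfl⟩
      exact (t.1 j).2
    · rw [finrank_span_eq_card (t.2.map' _ P.1.ker_subtype), Fintype.card_fin, P.2]⟩
  left_inv _ := rfl
  right_inv _ := rfl

attribute [local instance] Fintype.ofFinite in
lemma card_subspaces_mul_prod [Fintype K] (i : ℕ) :
    Nat.card {P : Submodule K M // finrank K P = i} *
        ∏ j : Fin i, (Fintype.card K ^ i - Fintype.card K ^ (j : ℕ)) =
      Nat.card {s : Fin i → M // LinearIndependent K s} := by
  have : Finite M := Module.finite_of_finite K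
  let spanOf (s : {s : Fin i → M // LinearIndependent K s}) :
      {P : Submodule K M // finrank K P = i} :=
    ⟨Submodule.span K (Set.range s.1), by rw [finrank_span_eq_card s.2, Fintype.card_fin]⟩
  calc _ = ∑ P, Nat.card {t : Fin i → P.1 // LinearIndependent K t} := by
        rw [sum_congr rfl fun P _ => by rw [card_linearIndependent P.2.ge, P.2], sum_const,
          smul_eq_mul, card_univ, Nat.card_eq_fintype_card]
    _ = ∑ P, Nat.card {s // spanOf s = P} := sum_congr rfl fun P _ => Nat.card_congr <|
        ((Equiv.subtypeEquivRight fun _ => Subtype.ext_iff).trans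
          (linearIndependentSpanEquiv P)).symm
    _ = _ := by rw [← Nat.card_sigma, Nat.card_congr (Equiv.sigmaFiberEquiv spanOf)]

lemma card_subspaces_le [Fintype K] {i : ℕ} (hi : i ≤ finrank K M) :
    Nat.card {P : Submodule K M // finrank K P = i} ≤
      Fintype.card K ^ (i * (finrank K M - i + 1)) := by
  set q := Fintype.card K
  set k := finrank K M
  have hq : 2 ≤ q := Fintype.one_lt_card
  have hexp : k * i = i * (k - i + 1) + i * (i - 1) := by
    obtain ⟨m, hm⟩ : ∃ m, k = i + m := ⟨k - i, by omega⟩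
    rw [hm]
    rcases i with _ | i
    · simp
    · rw [show i + 1 + m - (i + 1) + 1 = m + 1 by omega, Nat.add_sub_cancel]
      ring
  refine Nat.le_of_mul_le_mul_right (c := q ^ (i * (i - 1))) ?_ (by positivity)
  calc _ ≤ Nat.card {P : Submodule K M // finrank K P = i} *
        ∏ j : Fin i, (q ^ i - q ^ (j : ℕ)) := by
        refine Nat.mul_le_mul_left _ ?_
        simpa [mul_comm i, pow_mul] using pow_card_le_prod univ
          (fun j : Fin i => q ^ i - q ^ (j : ℕ)) _ fun j _ => pow_pred_le_pow_sub_pow hq j.2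
    _ = ∏ j : Fin i, (q ^ k - q ^ (j : ℕ)) := by
        have : Finite M := Module.finite_of_finite K
        rw [card_subspaces_mul_prod, card_linearIndependent hi]
    _ ≤ q ^ (k * i) := by
        simpa [pow_mul] using prod_le_pow_card univ
          (fun j : Fin i => q ^ k - q ^ (j : ℕ)) _ fun j _ => Nat.sub_le _ _
    _ = _ := by rw [hexp, pow_add]

lemma sum_Icc_card_subspaces_eq_one {a : ℕ → ℤ} (ha1 : a 1 = 1)
    (hrec : ∀ k, 2 ≤ k → a k = 1 - ∑ i ∈ Ico 1 k,
      a i * Nat.card {P : Submodule K (Fin k → K) // finrank K P = i})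
    (hM : 1 ≤ finrank K M) {d : ℕ} (hd : finrank K M ≤ d) :
    ∑ i ∈ Icc 1 d, a i * Nat.card {P : Submodule K M // finrank K P = i} = 1 := by
  set n := finrank K M
  calc _ = ∑ i ∈ Icc 1 n, a i * Nat.card {P : Submodule K M // finrank K P = i} := by
        refine (sum_subset (Icc_subset_Icc_right hd) fun i hi hin => ?_).symm
        rw [card_subspaces_eq_zero_of_finrank_lt, Nat.cast_zero, mul_zero]
        simp only [mem_Icc] at hi hin
        omega
    _ = ∑ i ∈ Ico 1 n, a i * Nat.card {P : Submodule K (Fin n → K) // finrank K P = i}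
          + a n := by
        rw [← Ico_add_one_right_eq_Icc, sum_Ico_succ_top hM, card_subspaces_finrank_self,
          Nat.cast_one, mul_one]
        congr 1
        exact sum_congr rfl fun i _ => by rw [card_subspaces_congr (finBasis K M).equivFun]
    _ = 1 := by
        rcases hM.eq_or_lt with h | h
        · simp [← h, ha1]
        · rw [hrec n h]
          ring

end Subspaces

lemma sq_add_exponent_le {i k : ℕ} (hik : i < k) :
    2 * i ^ 2 + i * (k - i + 1) ≤ 2 * k ^ 2 - 2 * k := by
  obtain ⟨j, rfl⟩ : ∃ j, k = i + j + 1 := ⟨k - i - 1, by omega⟩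
  rw [show i + j + 1 - i + 1 = j + 2 by omega]
  have : 2 * i ^ 2 + i * (j + 2) + 2 * (i + j + 1) ≤ 2 * (i + j + 1) ^ 2 := by nlinarith
  omega

lemma abs_le_pow_of_recurrence {q : ℕ} (hq : 2 ≤ q) {a : ℕ → ℤ} {N : ℕ → ℕ → ℕ}
    (ha1 : a 1 = 1) (hrec : ∀ k, 2 ≤ k → a k = 1 - ∑ i ∈ Ico 1 k, a i * N k i)
    (hN : ∀ k i, i < k → N k i ≤ q ^ (i * (k - i + 1))) {k : ℕ} (hk : 1 ≤ k) :
    |a k| ≤ (q : ℤ) ^ (2 * k ^ 2) := by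
  induction k using Nat.strong_induction_on with
  | _ k ih =>
  have hq1 : (1 : ℤ) ≤ q := by exact_mod_cast (by omega : 1 ≤ q)
  rcases hk.eq_or_lt with rfl | hk2
  · rw [ha1, abs_one]
    exact one_le_pow₀ hq1
  set X := (q : ℤ) ^ (2 * k ^ 2 - 2 * k)
  have hterm : ∀ i ∈ Ico 1 k, |a i * N k i| ≤ X := fun i hi => by
    obtain ⟨hi1, hik⟩ := mem_Ico.mp hi
    calc |a i * N k i| = |a i| * N k i := by rw [abs_mul, Nat.abs_cast]
      _ ≤ (q : ℤ) ^ (2 * i ^ 2) * (q : ℤ) ^ (i * (k - i + 1)) := by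
          gcongr
          · exact ih i hik hi1
          · exact_mod_cast hN k i hik
      _ ≤ X := by rw [← pow_add]; exact pow_le_pow_right₀ hq1 (sq_add_exponent_le hik)
  have hk_le : (k : ℤ) ≤ (q : ℤ) ^ (2 * k) := by
    exact_mod_cast (Nat.lt_pow_self (by omega : 1 < q)).le.trans
      (Nat.pow_le_pow_right (by omega) (by omega))
  calc |a k| = |1 - ∑ i ∈ Ico 1 k, a i * N k i| := by rw [hrec k hk2]
    _ ≤ 1 + ∑ i ∈ Ico 1 k, |a i * N k i| := by
        grw [abs_sub, abs_sum_le_sum_abs, abs_one]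
    _ ≤ 1 + (k - 1) * X := by
        grw [sum_le_card_nsmul _ _ _ hterm, Nat.card_Ico, nsmul_eq_mul, Nat.cast_sub hk,
          Nat.cast_one]
    _ ≤ k * X := by nlinarith [one_le_pow₀ (n := 2 * k ^ 2 - 2 * k) hq1]
    _ ≤ (q : ℤ) ^ (2 * k) * X := by gcongr
    _ = (q : ℤ) ^ (2 * k ^ 2) := by
        have : 2 * k ≤ 2 * k ^ 2 := by nlinarith
        rw [← pow_add]
        congr 1
        omega

theorem stmt18_general (p s : ℕ) [Fact p.Prime] (a : ℕ → ℤ)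
    (ha1 : a 1 = 1)
    (hrec : ∀ k, 2 ≤ k →
      a k = 1 - ∑ i ∈ Finset.Ico 1 k,
        a i * (numSub p s (Fin k → GaloisField p s) i : ℤ)) :
    (∀ k, 1 ≤ k → |a k| ≤ (Nat.card (GaloisField p s) : ℤ) ^ (2 * k ^ 2)) ∧
    (∀ (V' : Type) [AddCommGroup V'] [Module (GaloisField p s) V']
        [FiniteDimensional (GaloisField p s) V'] (d : ℕ),
      1 ≤ Module.finrank (GaloisField p s) V' →
      Module.finrank (GaloisField p s) V' ≤ d →
      ∑ i ∈ Finset.Icc 1 d, a i * (numSub p s V' i : ℤ) = 1) := by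
  have : Fintype (GaloisField p s) := Fintype.ofFinite _
  refine ⟨fun k hk => ?_, fun V' _ _ _ d hV hd => sum_Icc_card_subspaces_eq_one ha1 hrec hV hd⟩
  rw [Nat.card_eq_fintype_card]
  refine abs_le_pow_of_recurrence Fintype.one_lt_card ha1 hrec (fun k i hik => ?_) hk
  have hk : finrank (GaloisField p s) (Fin k → GaloisField p s) = k := finrank_fin_fun _
  have h := card_subspaces_le (K := GaloisField p s) (M := Fin k → GaloisField p s)
    (hk ▸ hik.le)
  rwa [hk] at h

/-- the inclusion–exclusion coefficients `a_k` satisfy `|a_k| ≤ q^{2k²}`,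
and `∑_{i=1}^d a_i · [dim V' choose i]_q = 1` for `1 ≤ dim V' ≤ d`. -/
theorem stmt18 (p s : ℕ) [Fact p.Prime] (hs : s ≠ 0) (a : ℕ → ℤ)
    (ha1 : a 1 = 1)
    (hrec : ∀ k, 2 ≤ k →
      a k = 1 - ∑ i ∈ Finset.Ico 1 k,
        a i * (numSub p s (Fin k → GaloisField p s) i : ℤ)) :
    (∀ k, 1 ≤ k → |a k| ≤ (Nat.card (GaloisField p s) : ℤ) ^ (2 * k ^ 2)) ∧
    (∀ (V' : Type) [AddCommGroup V'] [Module (GaloisField p s) V']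
        [FiniteDimensional (GaloisField p s) V'] (d : ℕ),
      1 ≤ Module.finrank (GaloisField p s) V' →
      Module.finrank (GaloisField p s) V' ≤ d →
      ∑ i ∈ Finset.Icc 1 d, a i * (numSub p s V' i : ℤ) = 1) :=
  stmt18_general p s a ha1 hrec
end

section
/- Let q be a prime power, V, W finite-dimensional F_q-vector spaces, X, Y, Z ∈ L(W,V) with Y + Z = X. Then at least one of the following holds: (1) Im(Y) ∩ Im(Z) ∩ Im(X) ≠ {0}; (2) ker(Y) + ker(Z) + ker(X) ≠ W; (3) there exist Y' ≤ Y and Z' ≤ Z with Y' + Z' = X and rank(X) = rank(Y') + rank(Z'). -/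
open LinearMap Module

namespace Submodule

section Semiring

variable {R M N : Type*} [Semiring R] [AddCommMonoid M] [Module R M] [AddCommMonoid N]
  [Module R N] {p : Submodule R M} {f g : M →ₗ[R] N}

theorem map_eq_map_of_eqOn (h : Set.EqOn f g p) : p.map f = p.map g :=
  SetLike.coe_injective (by simpa only [map_coe] using h.image_eq)

theorem map_add_of_le_ker_right (hg : p ≤ ker g) : p.map (f + g) = p.map f :=
  map_eq_map_of_eqOn fun x hx => by simp [mem_ker.1 (hg hx)]

theorem map_add_of_le_ker_left (hf : p ≤ ker f) : p.map (f + g) = p.map g :=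
  map_eq_map_of_eqOn fun x hx => by simp [mem_ker.1 (hf hx)]

theorem range_eq_map_sup_map_sup_map {A B C : Submodule R M} (hABC : A ⊔ B ⊔ C = ⊤)
    (f : M →ₗ[R] N) : range f = A.map f ⊔ B.map f ⊔ C.map f := by
  rw [range_eq_map, ← hABC, map_sup, map_sup]

end Semiring

theorem map_eq_map_of_le_ker_add {R M N : Type*} [Ring R] [AddCommGroup M] [Module R M]
    [AddCommGroup N] [Module R N] {p : Submodule R M} {f g : M →ₗ[R] N} (h : p ≤ ker (f + g)) :
    p.map g = p.map f := by
  rw [← p.map_neg f]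
  exact map_eq_map_of_eqOn fun x hx => eq_neg_of_add_eq_zero_right (mem_ker.1 (h hx))

theorem finrank_sup_of_disjoint {K V : Type*} [DivisionRing K] [AddCommGroup V] [Module K V]
    [FiniteDimensional K V] {s t : Submodule K V} (h : Disjoint s t) :
    finrank K ↥(s ⊔ t) = finrank K s + finrank K t := by
  rw [← finrank_sup_add_finrank_inf_eq, h.eq_bot, finrank_bot, add_zero]

end Submodule

open Submodule

theorem LinearMap.exists_eqOn_and_le_ker_of_disjoint_map {K V W : Type*} [DivisionRing K]
    [AddCommGroup V] [Module K V] [AddCommGroup W] [Module K W] (f : W →ₗ[K] V)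
    {A B : Submodule K W} (hAB : Disjoint (A.map f) (B.map f)) :
    ∃ g : W →ₗ[K] V, Set.EqOn g f B ∧ A ≤ ker g ∧ ker f ≤ ker g := by
  obtain ⟨Q, hAQ, hQB⟩ := hAB.exists_isCompl
  refine ⟨(B.map f).projection Q hQB.symm ∘ₗ f, fun b hb => ?_, fun a ha => ?_, fun c hc => ?_⟩
  · exact projection_apply_of_mem_left _ (mem_map_of_mem hb)
  · exact projection_apply_of_mem_right _ (hAQ (mem_map_of_mem ha))
  · simp [mem_ker.1 hc]

section Ring

variable {R V W : Type*} [Ring R] [AddCommGroup V] [Module R V] [AddCommGroup W] [Module R W]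
  {X Y Z : W →ₗ[R] V}

theorem range_left_eq_of_ker_sup_eq_top (h : Y + Z = X) (hK : ker Y ⊔ ker Z ⊔ ker X = ⊤) :
    range Y = (ker Z).map X ⊔ (ker X).map Y := by
  subst h
  rw [range_eq_map_sup_map_sup_map hK, le_ker_iff_map.1 le_rfl, bot_sup_eq,
    map_add_of_le_ker_right le_rfl]

theorem range_right_eq_of_ker_sup_eq_top (h : Y + Z = X) (hK : ker Y ⊔ ker Z ⊔ ker X = ⊤) :
    range Z = (ker Y).map X ⊔ (ker X).map Y := by
  subst h
  rw [range_eq_map_sup_map_sup_map hK, le_ker_iff_map.1 (le_refl (ker Z)), sup_bot_eq,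
    map_add_of_le_ker_left le_rfl, map_eq_map_of_le_ker_add le_rfl]

theorem disjoint_map_ker_of_inf_range_eq_bot (h : Y + Z = X)
    (hR : range Y ⊓ range Z ⊓ range X = ⊥) :
    Disjoint ((ker Y).map X) ((ker Z).map X) ∧ Disjoint ((ker Y).map X) ((ker X).map Y) ∧
      Disjoint ((ker Z).map X) ((ker X).map Y) := by
  subst h
  have hA : (ker Y).map (Y + Z) ≤ range Z ⊓ range (Y + Z) :=
    le_inf ((map_add_of_le_ker_left le_rfl).trans_le map_le_range) map_le_range
  have hB : (ker Z).map (Y + Z) ≤ range Y ⊓ range (Y + Z) :=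
    le_inf ((map_add_of_le_ker_right le_rfl).trans_le map_le_range) map_le_range
  have hC : (ker (Y + Z)).map Y ≤ range Y ⊓ range Z :=
    le_inf map_le_range ((map_eq_map_of_le_ker_add le_rfl).symm.trans_le map_le_range)
  refine ⟨?_, ?_, ?_⟩ <;> rw [disjoint_iff, eq_bot_iff, ← hR] <;> intro v ⟨hs, ht⟩
  · exact ⟨⟨(hB ht).1, (hA hs).1⟩, (hA hs).2⟩
  · exact ⟨⟨(hC ht).1, (hA hs).1⟩, (hA hs).2⟩
  · exact ⟨⟨(hB hs).1, (hC ht).2⟩, (hB hs).2⟩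

theorem range_eq_of_eqOn_ker_and_le_ker (h : Y + Z = X) (hK : ker Y ⊔ ker Z ⊔ ker X = ⊤)
    {Y' : W →ₗ[R] V} (hB : Set.EqOn Y' X (ker Z)) (hA : ker Y ≤ ker Y') (hC : ker X ≤ ker Y') :
    range Y' = (ker Z).map X ∧ range (Y - Y') = (ker X).map Y ∧
      range (X - Y') = (ker Y).map X ∧ range (Z - (X - Y')) = (ker X).map Y := by
  subst h
  have hYY' : range (Y - Y') = (ker (Y + Z)).map Y := by
    rw [range_eq_map_sup_map_sup_map hK, le_ker_iff_map.1, le_ker_iff_map.1,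
      map_eq_map_of_eqOn (g := Y), bot_sup_eq, bot_sup_eq]
    · exact fun c hc => by simp [mem_ker.1 (hC hc)]
    · exact fun b hb => by simp [hB hb, mem_ker.1 hb]
    · exact fun a ha => by simp [mem_ker.1 ha, mem_ker.1 (hA ha)]
  refine ⟨?_, hYY', ?_, ?_⟩
  · rw [range_eq_map_sup_map_sup_map hK, le_ker_iff_map.1 hA, le_ker_iff_map.1 hC,
      map_eq_map_of_eqOn hB, bot_sup_eq, sup_bot_eq]
  · rw [range_eq_map_sup_map_sup_map hK, (le_ker_iff_map (f := Y + Z - Y') (p := ker Z)).1,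
      (le_ker_iff_map (f := Y + Z - Y') (p := ker (Y + Z))).1,
      map_eq_map_of_eqOn (g := Y + Z), sup_bot_eq, sup_bot_eq]
    · exact fun a ha => by simp [mem_ker.1 (hA ha)]
    · exact fun c hc => by simp [mem_ker.1 hc, mem_ker.1 (hC hc)]
    · exact fun b hb => by simp [hB hb]
  · rw [← hYY', ← range_neg]
    congr 1
    abel

end Ring

theorem exists_rLE_split_of_inf_range_eq_bot_of_ker_sup_eq_top {K V W : Type*} [Field K]
    [AddCommGroup V] [Module K V] [FiniteDimensional K V] [AddCommGroup W] [Module K W]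
    {X Y Z : W →ₗ[K] V} (h : Y + Z = X) (hR : range Y ⊓ range Z ⊓ range X = ⊥)
    (hK : ker Y ⊔ ker Z ⊔ ker X = ⊤) :
    ∃ Y' Z' : W →ₗ[K] V, rLE K Y' Y ∧ rLE K Z' Z ∧ Y' + Z' = X ∧
      finrank K (range X) = finrank K (range Y') + finrank K (range Z') := by
  obtain ⟨hAB, hAC, hBC⟩ := disjoint_map_ker_of_inf_range_eq_bot h hR
  obtain ⟨Y', hB, hA, hC⟩ := X.exists_eqOn_and_le_ker_of_disjoint_map hAB
  obtain ⟨hY', hYY', hZ', hZZ'⟩ := range_eq_of_eqOn_ker_and_le_ker h hK hB hA hC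
  refine ⟨Y', X - Y', ?_, ?_, add_sub_cancel Y' X, ?_⟩
  · rw [rLE, hY', hYY', range_left_eq_of_ker_sup_eq_top h hK, finrank_sup_of_disjoint hBC]
  · rw [rLE, hZ', hZZ', range_right_eq_of_ker_sup_eq_top h hK, finrank_sup_of_disjoint hAC]
  · rw [hY', hZ', range_eq_map_sup_map_sup_map hK, le_ker_iff_map.1 (le_refl (ker X)), sup_bot_eq,
      finrank_sup_of_disjoint hAB, add_comm]

theorem stmt19_general (p s : ℕ) [Fact p.Prime]
    (V W : Type) [AddCommGroup V] [Module (GaloisField p s) V]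
    [FiniteDimensional (GaloisField p s) V]
    [AddCommGroup W] [Module (GaloisField p s) W]
    (X Y Z : W →ₗ[GaloisField p s] V) (h : Y + Z = X) :
    (LinearMap.range Y ⊓ LinearMap.range Z ⊓ LinearMap.range X ≠ ⊥) ∨
    (LinearMap.ker Y ⊔ LinearMap.ker Z ⊔ LinearMap.ker X ≠ ⊤) ∨
    (∃ Y' Z' : W →ₗ[GaloisField p s] V,
      rLE (GaloisField p s) Y' Y ∧ rLE (GaloisField p s) Z' Z ∧ Y' + Z' = X ∧
      Module.finrank (GaloisField p s) (LinearMap.range X) =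
        Module.finrank (GaloisField p s) (LinearMap.range Y') +
          Module.finrank (GaloisField p s) (LinearMap.range Z')) := by
  rw [or_iff_not_imp_left, or_iff_not_imp_left, not_not, not_not]
  exact fun hR hK => exists_rLE_split_of_inf_range_eq_bot_of_ker_sup_eq_top h hR hK

/-- if `Y + Z = X` then either the images of `X, Y, Z` have a common
nonzero vector, or the kernels of `X, Y, Z` do not span `W`, or `X` splits as a direct
sum `Y' ⊕ Z'` with `Y' ≤ Y` and `Z' ≤ Z`. -/
theorem stmt19 (p s : ℕ) [Fact p.Prime] (hs : s ≠ 0)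
    (V W : Type) [AddCommGroup V] [Module (GaloisField p s) V]
    [FiniteDimensional (GaloisField p s) V]
    [AddCommGroup W] [Module (GaloisField p s) W]
    [FiniteDimensional (GaloisField p s) W]
    (X Y Z : W →ₗ[GaloisField p s] V) (h : Y + Z = X) :
    (LinearMap.range Y ⊓ LinearMap.range Z ⊓ LinearMap.range X ≠ ⊥) ∨
    (LinearMap.ker Y ⊔ LinearMap.ker Z ⊔ LinearMap.ker X ≠ ⊤) ∨
    (∃ Y' Z' : W →ₗ[GaloisField p s] V,
      rLE (GaloisField p s) Y' Y ∧ rLE (GaloisField p s) Z' Z ∧ Y' + Z' = X ∧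
      Module.finrank (GaloisField p s) (LinearMap.range X) =
        Module.finrank (GaloisField p s) (LinearMap.range Y') +
          Module.finrank (GaloisField p s) (LinearMap.range Z')) :=
  stmt19_general p s V W X Y Z h
end
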